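/- Let DB be a finite uncertain database whose events take values in [0,1], let α = β ++ ⟨{i}⟩ for a pattern β and item i, and let γ ∈ ℝ. If expSup^cap_DB(α) < γ, then expSup_DB(α') < γ for every pattern α' with α ⊑ α' (in particular expSup_DB(α) < γ). Hence pruning all extensions of α is safe and generates no false negatives. (Pruning conclusion of Lemma 1.) -/

import Mathlib

open scoped Classical

noncomputable section

variable {I : Type*}

/-- `js` is an occurrence of pattern `α` in uncertain sequence `S`:
a strictly increasing list of 1-based positions `1 ≤ j₁ < ⋯ < jₘ ≤ n`. -/
def IsOcc (S : List (I → ℝ)) (α : List (Finset I)) (js : List ℕ) : Prop :=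
  js.length = α.length ∧ List.Pairwise (· < ·) js ∧ ∀ j ∈ js, 1 ≤ j ∧ j ≤ S.length

/-- The probability of the occurrence `js` of pattern `α` in `S`:
`∏ₖ ∏_{i ∈ eₖ} p_{jₖ}(i)`. -/
def occProb (S : List (I → ℝ)) (α : List (Finset I)) (js : List ℕ) : ℝ :=
  ((α.zip js).map fun ej => ∏ i ∈ ej.1, S.getD (ej.2 - 1) (fun _ => (0 : ℝ)) i).prod

/-- `maxPr_S(α)`: the maximum occurrence probability of `α` in `S`
(`0` if there is no occurrence, since `sSup ∅ = 0` in `ℝ`; `1` for the empty pattern). -/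
def maxPr (S : List (I → ℝ)) (α : List (Finset I)) : ℝ :=
  sSup {x : ℝ | ∃ js, IsOcc S α js ∧ occProb S α js = x}

/-- `α ⊑ α'`: there are positions `j₁ < ⋯ < jₘ` in `α'` with `eₖ ⊆ e'_{jₖ}` for all `k`. -/
def IsSubpattern (α α' : List (Finset I)) : Prop :=
  ∃ β : List (Finset I), List.Forall₂ (· ⊆ ·) α β ∧ β.Sublist α'

/-- Expected support of `α` in a database `DB`. -/
def expSup (DB : List (List (I → ℝ))) (α : List (Finset I)) : ℝ :=
  (DB.map fun S => maxPr S α).sum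

/-- `maxPr_DB(α) = max_{S ∈ DB} maxPr_S(α)`, `0` for an empty database. -/
def maxPrDB (DB : List (List (I → ℝ))) (α : List (Finset I)) : ℝ :=
  (DB.map fun S => maxPr S α).foldr max 0

/-- `expSup^cap_DB(β ++ ⟨{i}⟩) = maxPr_DB(β) · Σ_{S ∈ DB} maxPr_S(⟨{i}⟩)`. -/
def expSupCap (DB : List (List (I → ℝ))) (β : List (Finset I)) (i : I) : ℝ :=
  maxPrDB DB β * expSup DB [{i}]

/-- Support count of item `i`: the number of sequences `S ∈ DB` with `maxPr_S(⟨{i}⟩) > 0`. -/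
def supCount (DB : List (List (I → ℝ))) (i : I) : ℕ :=
  (DB.filter fun S => decide (0 < maxPr S [({i} : Finset I)])).length

/-- The set of items occurring in a pattern. -/
def pItems (α : List (Finset I)) : Finset I :=
  α.foldr (· ∪ ·) ∅

/-- The size of a pattern: total number of items counted across events. -/
def pSize (α : List (Finset I)) : ℕ :=
  (α.map Finset.card).sum

/-- `sWeight(α)`: the sum of the weights of all items of `α` divided by its size. -/
def sWeight (w : I → ℝ) (α : List (Finset I)) : ℝ :=
  (α.map fun e => ∑ i ∈ e, w i).sum / (pSize α : ℝ)

/-- `wgt^cap_F(α)`: the maximum of `w` over `F ∪ items(α)`. -/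
def wgtCap (w : I → ℝ) (F : Finset I) (α : List (Finset I)) : ℝ :=
  (F ∪ pItems α).fold max 0 w

/-- Weighted expected support: `WES_DB(α) = expSup_DB(α) · sWeight(α)`. -/
def WES (DB : List (List (I → ℝ))) (w : I → ℝ) (α : List (Finset I)) : ℝ :=
  expSup DB α * sWeight w α

/-- The SupCalc array `g_{S,α}(m)`: for nonempty `α`, the maximum probability of an
occurrence of `α` in `S` whose last position is `m` (`0` if none, in particular for `m = 0`);
for the empty pattern it is `1`. -/
def gArr (S : List (I → ℝ)) (α : List (Finset I)) (m : ℕ) : ℝ :=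
  if α = [] then 1
  else sSup {x : ℝ | ∃ js, IsOcc S α js ∧ js.getLast? = some m ∧ occProb S α js = x}

section Aux

variable (S : List (I → ℝ))

/-- Bounds on the `getD` access used in `occProb`. -/
lemma getD_bounds (hS : ∀ p ∈ S, ∀ i : I, 0 ≤ p i ∧ p i ≤ 1) (k : ℕ) (i : I) :
    0 ≤ S.getD k (fun _ => (0 : ℝ)) i ∧ S.getD k (fun _ => (0 : ℝ)) i ≤ 1 := by
  by_cases hk : k < S.length
  · rw [List.getD_eq_getElem _ _ hk]
    exact hS _ (List.getElem_mem hk) i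
  · rw [List.getD_eq_default _ _ (le_of_not_gt hk)]
    norm_num

/-- Each factor of `occProb` lies in `[0,1]`. -/
lemma factor_bounds (hS : ∀ p ∈ S, ∀ i : I, 0 ≤ p i ∧ p i ≤ 1) (e : Finset I) (k : ℕ) :
    0 ≤ (∏ i ∈ e, S.getD k (fun _ => (0 : ℝ)) i) ∧
      (∏ i ∈ e, S.getD k (fun _ => (0 : ℝ)) i) ≤ 1 :=
  ⟨Finset.prod_nonneg fun i _ => (getD_bounds S hS k i).1,
   Finset.prod_le_one (fun i _ => (getD_bounds S hS k i).1)
     (fun i _ => (getD_bounds S hS k i).2)⟩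

lemma list_prod_bounds {L : List ℝ} (hL : ∀ x ∈ L, 0 ≤ x ∧ x ≤ 1) :
    0 ≤ L.prod ∧ L.prod ≤ 1 := by
  induction L with
  | nil => norm_num
  | cons a L ih =>
    obtain ⟨h0, h1⟩ := ih fun x hx => hL x (List.mem_cons_of_mem a hx)
    obtain ⟨ha0, ha1⟩ := hL a (List.mem_cons_self)
    rw [List.prod_cons]
    constructor
    · exact mul_nonneg ha0 h0
    · calc a * L.prod ≤ 1 * 1 := mul_le_mul ha1 h1 h0 one_pos.le
        _ = 1 := by ring

lemma list_prod_le_of_sublist {L M : List ℝ} (h : L.Sublist M)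
    (hM : ∀ x ∈ M, 0 ≤ x ∧ x ≤ 1) : M.prod ≤ L.prod := by
  induction h with
  | slnil => exact le_refl _
  | @cons L M a h ih =>
    have hM' : ∀ x ∈ M, 0 ≤ x ∧ x ≤ 1 := fun x hx => hM x (List.mem_cons_of_mem a hx)
    rw [List.prod_cons]
    calc a * M.prod ≤ 1 * M.prod :=
          mul_le_mul_of_nonneg_right (hM a (List.mem_cons_self)).2 (list_prod_bounds hM').1
      _ = M.prod := one_mul _
      _ ≤ L.prod := ih hM'
  | @cons_cons L M a h ih =>
    have hM' : ∀ x ∈ M, 0 ≤ x ∧ x ≤ 1 := fun x hx => hM x (List.mem_cons_of_mem a hx)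
    rw [List.prod_cons, List.prod_cons]
    exact mul_le_mul_of_nonneg_left (ih hM') (hM a (List.mem_cons_self)).1

lemma occProb_bounds (hS : ∀ p ∈ S, ∀ i : I, 0 ≤ p i ∧ p i ≤ 1)
    (α : List (Finset I)) (js : List ℕ) :
    0 ≤ occProb S α js ∧ occProb S α js ≤ 1 := by
  apply list_prod_bounds
  intro x hx
  simp only [List.mem_map] at hx
  obtain ⟨⟨e, j⟩, _, rfl⟩ := hx
  exact factor_bounds S hS e (j - 1)

lemma maxPr_nonneg (hS : ∀ p ∈ S, ∀ i : I, 0 ≤ p i ∧ p i ≤ 1)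
    (α : List (Finset I)) : 0 ≤ maxPr S α := by
  apply Real.sSup_nonneg
  rintro x ⟨js, _, rfl⟩
  exact (occProb_bounds S hS α js).1

lemma maxPr_bddAbove (hS : ∀ p ∈ S, ∀ i : I, 0 ≤ p i ∧ p i ≤ 1)
    (α : List (Finset I)) :
    BddAbove {x : ℝ | ∃ js, IsOcc S α js ∧ occProb S α js = x} := by
  refine ⟨1, ?_⟩
  rintro x ⟨js, _, rfl⟩
  exact (occProb_bounds S hS α js).2

lemma le_maxPr (hS : ∀ p ∈ S, ∀ i : I, 0 ≤ p i ∧ p i ≤ 1)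
    {α : List (Finset I)} {js : List ℕ} (h : IsOcc S α js) :
    occProb S α js ≤ maxPr S α :=
  le_csSup (maxPr_bddAbove S hS α) ⟨js, h, rfl⟩

lemma maxPr_le (hS : ∀ p ∈ S, ∀ i : I, 0 ≤ p i ∧ p i ≤ 1)
    {α : List (Finset I)} {c : ℝ} (hc : 0 ≤ c)
    (h : ∀ js, IsOcc S α js → occProb S α js ≤ c) : maxPr S α ≤ c := by
  apply Real.sSup_le _ hc
  rintro x ⟨js, hjs, rfl⟩
  exact h js hjs

/-- From a sublist relation on patterns and positions for the big pattern, get positions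
for the small one together with a sublist relation on the zipped lists. -/
lemma exists_zip_sublist {δ α' : List (Finset I)} (h : δ.Sublist α') :
    ∀ js' : List ℕ, js'.length = α'.length →
    ∃ js : List ℕ, js.length = δ.length ∧ js.Sublist js' ∧
      (δ.zip js).Sublist (α'.zip js') := by
  induction h with
  | slnil =>
    intro js' hlen
    simp only [List.length_nil] at hlen
    obtain rfl := List.eq_nil_of_length_eq_zero hlen
    exact ⟨[], rfl, List.Sublist.refl _, by simp⟩
  | @cons δ l a h ih =>
    intro js' hlen
    cases js' with
    | nil => simp at hlen
    | cons j js'' =>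
      simp only [List.length_cons, Nat.add_right_cancel_iff] at hlen
      obtain ⟨js, h1, h2, h3⟩ := ih js'' hlen
      exact ⟨js, h1, h2.trans (List.sublist_cons_self j js''),
        by rw [List.zip_cons_cons]; exact h3.trans (List.sublist_cons_self (a, j) _)⟩
  | @cons_cons δ l a h ih =>
    intro js' hlen
    cases js' with
    | nil => simp at hlen
    | cons j js'' =>
      simp only [List.length_cons, Nat.add_right_cancel_iff] at hlen
      obtain ⟨js, h1, h2, h3⟩ := ih js'' hlen
      refine ⟨j :: js, by simp [h1], h2.cons₂ j, ?_⟩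
      rw [List.zip_cons_cons, List.zip_cons_cons]
      exact h3.cons₂ _

/-- Shrinking each event (pointwise `⊆`) can only increase the occurrence probability. -/
lemma occProb_le_of_forall₂ (hS : ∀ p ∈ S, ∀ i : I, 0 ≤ p i ∧ p i ≤ 1)
    {α δ : List (Finset I)} (h : List.Forall₂ (· ⊆ ·) α δ) :
    ∀ js : List ℕ, occProb S δ js ≤ occProb S α js := by
  induction h with
  | nil => intro js; exact le_refl _
  | @cons e e' α δ he _ ih =>
    intro js
    cases js with
    | nil => simp [occProb]
    | cons j js =>
      simp only [occProb, List.zip_cons_cons, List.map_cons, List.prod_cons]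
      have hfac : (∏ i ∈ e', S.getD (j - 1) (fun _ => (0 : ℝ)) i) ≤
          ∏ i ∈ e, S.getD (j - 1) (fun _ => (0 : ℝ)) i := by
        rw [← Finset.prod_sdiff he]
        calc (∏ i ∈ e' \ e, S.getD (j - 1) (fun _ => (0 : ℝ)) i) *
              ∏ i ∈ e, S.getD (j - 1) (fun _ => (0 : ℝ)) i
            ≤ 1 * ∏ i ∈ e, S.getD (j - 1) (fun _ => (0 : ℝ)) i :=
              mul_le_mul_of_nonneg_right (factor_bounds S hS _ _).2
                (factor_bounds S hS _ _).1
          _ = _ := one_mul _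
      have h0 : 0 ≤ occProb S δ js := (occProb_bounds S hS δ js).1
      have h0' : (0:ℝ) ≤ ∏ i ∈ e, S.getD (j - 1) (fun _ => (0 : ℝ)) i :=
        (factor_bounds S hS _ _).1
      exact mul_le_mul hfac (ih js) h0 h0'

/-- `maxPr` is antitone with respect to the subpattern relation. -/
lemma maxPr_anti (hS : ∀ p ∈ S, ∀ i : I, 0 ≤ p i ∧ p i ≤ 1)
    {α α' : List (Finset I)} (h : IsSubpattern α α') :
    maxPr S α' ≤ maxPr S α := by
  obtain ⟨δ, hαδ, hδ⟩ := h
  apply maxPr_le S hS (maxPr_nonneg S hS α)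
  intro js' hocc'
  obtain ⟨hlen', hsort', hbd'⟩ := hocc'
  obtain ⟨js, hjslen, hjssub, hzipsub⟩ := exists_zip_sublist hδ js' hlen'
  have hocc : IsOcc S α js := by
    refine ⟨by rw [hjslen, hαδ.length_eq], hsort'.sublist hjssub,
      fun j hj => hbd' j (hjssub.subset hj)⟩
  calc occProb S α' js'
      ≤ occProb S δ js := by
        apply list_prod_le_of_sublist (hzipsub.map _)
        intro x hx
        simp only [List.mem_map] at hx
        obtain ⟨⟨e, j⟩, _, rfl⟩ := hx
        exact factor_bounds S hS e (j - 1)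
    _ ≤ occProb S α js := occProb_le_of_forall₂ S hS hαδ js
    _ ≤ maxPr S α := le_maxPr S hS hocc

/-- Splitting the last event off an occurrence probability. -/
lemma maxPr_append_singleton (hS : ∀ p ∈ S, ∀ i : I, 0 ≤ p i ∧ p i ≤ 1)
    (β : List (Finset I)) (i : I) :
    maxPr S (β ++ [{i}]) ≤ maxPr S β * maxPr S [({i} : Finset I)] := by
  apply maxPr_le S hS
    (mul_nonneg (maxPr_nonneg S hS β) (maxPr_nonneg S hS [({i} : Finset I)]))
  intro js hocc
  obtain ⟨hlen, hsort, hbd⟩ := hocc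
  have hne : js ≠ [] := by
    intro hjs
    rw [hjs] at hlen
    simp at hlen
  obtain ⟨ks, j, rfl⟩ : ∃ ks j, js = ks ++ [j] :=
    ⟨js.dropLast, js.getLast hne, (List.dropLast_append_getLast hne).symm⟩
  have hklen : ks.length = β.length := by
    simpa using hlen
  have hsplit : occProb S (β ++ [{i}]) (ks ++ [j]) =
      occProb S β ks * occProb S [({i} : Finset I)] [j] := by
    unfold occProb
    rw [List.zip_append hklen.symm]
    simp
  have hocck : IsOcc S β ks :=
    ⟨hklen, hsort.sublist (List.sublist_append_left ks [j]),
      fun x hx => hbd x (List.mem_append_left _ hx)⟩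
  have hoccj : IsOcc S [({i} : Finset I)] [j] :=
    ⟨rfl, List.pairwise_singleton _ j, fun x hx => by
      rw [List.mem_singleton] at hx
      exact hx ▸ hbd j (List.mem_append_right _ (List.mem_singleton_self j))⟩
  rw [hsplit]
  exact mul_le_mul (le_maxPr S hS hocck) (le_maxPr S hS hoccj)
    (occProb_bounds S hS _ _).1 (maxPr_nonneg S hS β)

lemma le_foldr_max {l : List ℝ} {x : ℝ} (hx : x ∈ l) : x ≤ l.foldr max 0 := by
  induction l with
  | nil => simp at hx
  | cons a l ih =>
    rcases List.mem_cons.mp hx with rfl | h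
    · exact le_max_left _ _
    · exact (ih h).trans (le_max_right _ _)

lemma foldr_max_nonneg (l : List ℝ) : 0 ≤ l.foldr max 0 := by
  induction l with
  | nil => exact le_refl 0
  | cons a l ih => exact ih.trans (le_max_right _ _)

end Aux

lemma maxPrDB_nonneg (DB : List (List (I → ℝ))) (α : List (Finset I)) :
    0 ≤ maxPrDB DB α := foldr_max_nonneg _

lemma maxPr_le_maxPrDB {DB : List (List (I → ℝ))} {S : List (I → ℝ)} (hs : S ∈ DB)
    (α : List (Finset I)) : maxPr S α ≤ maxPrDB DB α :=
  le_foldr_max (List.mem_map_of_mem hs)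

lemma expSup_le_expSupCap (DB : List (List (I → ℝ)))
    (hDB : ∀ S ∈ DB, ∀ p ∈ S, ∀ i : I, 0 ≤ p i ∧ p i ≤ 1)
    (β : List (Finset I)) (i : I) :
    expSup DB (β ++ [{i}]) ≤ expSupCap DB β i := by
  unfold expSupCap expSup
  rw [← List.sum_map_mul_left]
  apply List.sum_le_sum
  intro S hs
  calc maxPr S (β ++ [{i}])
      ≤ maxPr S β * maxPr S [({i} : Finset I)] :=
        maxPr_append_singleton S (hDB S hs) β i
    _ ≤ maxPrDB DB β * maxPr S [({i} : Finset I)] :=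
        mul_le_mul_of_nonneg_right (maxPr_le_maxPrDB hs β)
          (maxPr_nonneg S (hDB S hs) _)

lemma expSup_anti (DB : List (List (I → ℝ)))
    (hDB : ∀ S ∈ DB, ∀ p ∈ S, ∀ i : I, 0 ≤ p i ∧ p i ≤ 1)
    {α α' : List (Finset I)} (h : IsSubpattern α α') :
    expSup DB α' ≤ expSup DB α := by
  unfold expSup
  apply List.sum_le_sum
  intro S hs
  exact maxPr_anti S (hDB S hs) h

/-- pruning conclusion of Lemma 1: if `expSup^cap_DB(α) < γ` for
`α = β ++ ⟨{i}⟩`, then `expSup_DB(α) < γ` and `expSup_DB(α') < γ` for every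
supersequence `α'` of `α`. -/
theorem expSup_lt_of_expSupCap_lt
    (DB : List (List (I → ℝ)))
    (hDB : ∀ S ∈ DB, ∀ p ∈ S, ∀ i : I, 0 ≤ p i ∧ p i ≤ 1)
    (β : List (Finset I)) (i : I) (γ : ℝ)
    (h : expSupCap DB β i < γ) :
    expSup DB (β ++ [{i}]) < γ ∧
      ∀ α' : List (Finset I), IsSubpattern (β ++ [{i}]) α' → expSup DB α' < γ := by
  have h1 : expSup DB (β ++ [{i}]) < γ :=
    lt_of_le_of_lt (expSup_le_expSupCap DB hDB β i) h
  exact ⟨h1, fun α' hsub => lt_of_le_of_lt (expSup_anti DB hDB hsub) h1⟩
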